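/- Let I ⊆ R = MvPolynomial (Fin N) ℂ be an M-graded ideal, m ∈ M, and 1 ≤ i ≤ N. Then Φ_i(D_0^m(I)) = Φ_i(D_0^m(I ∩ ⟨x_i⟩)) = D_0^{m − w(i)}(I : x_i); explicitly, for every M-homogeneous polynomial q of degree m − w(i), the following are equivalent: (a) λ_q vanishes on the ideal quotient I : ⟨x_i⟩; (b) there exists an M-homogeneous p of degree m with λ_p vanishing on I and λ_q(f) = λ_p(x_i · f) for all f ∈ R; (c) there exists an M-homogeneous p of degree m with λ_p vanishing on I ∩ ⟨x_i⟩ and λ_q(f) = λ_p(x_i · f) for all f ∈ R. -/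

import Mathlib

/-!
For (a) ⇒ (b), put `s = x_i q`, so that `λ_s (x_i f) = λ_q f` and `λ_s` vanishes on
`I ∩ ⟨x_i⟩`. The functional equal to `λ_s` on `I` and to `0` on `⟨x_i⟩` is then well defined
on `I + ⟨x_i⟩`, and Artin–Rees lets one extend it to a functional on `R` that kills a power
of `𝔪 = ⟨x_1, …, x_N⟩`, i.e. to some `λ_r`. The degree-`m` component of `s - r` is the
required `p`, since the graded ideals `I` and `⟨x_i⟩` contain the homogeneous components of
their elements. The implications (b) ⇒ (c) ⇒ (a) are immediate.
-/

open MvPolynomial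

/-- The Macaulay pairing `λ_p(f) = ∑_α coeff(α,p) * coeff(α,f)`, as a linear functional. -/
noncomputable def lam {N : ℕ} (p : MvPolynomial (Fin N) ℂ) :
    MvPolynomial (Fin N) ℂ →ₗ[ℂ] ℂ where
  toFun f := ∑ α ∈ p.support, coeff α p * coeff α f
  map_add' f g := by simp [mul_add, Finset.sum_add_distrib]
  map_smul' c f := by
    simp [MvPolynomial.coeff_smul, Finset.mul_sum, mul_left_comm]

/-- An ideal is `M`-graded if it is generated by a set of `M`-homogeneous polynomials. -/
def IsMGraded {N : ℕ} {M : Type*} [AddCommGroup M] (w : Fin N → M)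
    (I : Ideal (MvPolynomial (Fin N) ℂ)) : Prop :=
  ∃ S : Set (MvPolynomial (Fin N) ℂ),
    (∀ s ∈ S, ∃ m : M, s.IsWeightedHomogeneous w m) ∧ I = Ideal.span S

theorem LinearMap.exists_eq_on_and_eq_zero_on {K V V' : Type*} [Field K] [AddCommGroup V]
    [Module K V] [AddCommGroup V'] [Module K V'] {U W : Submodule K V} (ψ : V →ₗ[K] V')
    (h : ∀ x ∈ U ⊓ W, ψ x = 0) :
    ∃ χ : V →ₗ[K] V', (∀ x ∈ U, χ x = ψ x) ∧ ∀ x ∈ W, χ x = 0 := by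
  let f : V →ₗ.[K] V' := ⟨U, ψ.domRestrict U⟩
  let g : V →ₗ.[K] V' := ⟨W, 0⟩
  have hfg : ∀ (x : f.domain) (y : g.domain), (x : V) = y → f x = g y := fun x y hxy =>
    h x ⟨x.2, hxy ▸ y.2⟩
  obtain ⟨χ, hχ⟩ := (f.sup g hfg).toFun.exists_extend
  have hχ_of_le {φ : V →ₗ.[K] V'} (hφ : φ ≤ f.sup g hfg) (x : φ.domain) : χ x = φ x :=
    (congr($hχ ⟨x, hφ.1 x.2⟩)).trans (hφ.2 rfl).symm
  exact ⟨χ, fun x hx => hχ_of_le (f.left_le_sup g hfg) ⟨x, hx⟩,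
    fun x hx => hχ_of_le (f.right_le_sup g hfg) ⟨x, hx⟩⟩

theorem Ideal.exists_pow_inf_le_pow_mul {R : Type*} [CommRing R] [IsNoetherianRing R]
    (I J : Ideal R) (k : ℕ) : ∃ l, I ^ l ⊓ J ≤ I ^ k * J := by
  obtain ⟨c, hc⟩ := I.exists_pow_inf_eq_pow_smul J
  refine ⟨k + c, ?_⟩
  have hkc := hc (k + c) (Nat.le_add_left c k)
  simp only [smul_eq_mul, Ideal.mul_top, Nat.add_sub_cancel] at hkc
  rw [hkc]
  exact Ideal.mul_mono_right inf_le_right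

section Pairing

variable {N : ℕ}

theorem lam_apply (p f : MvPolynomial (Fin N) ℂ) :
    lam p f = ∑ α ∈ p.support, coeff α p * coeff α f := rfl

theorem lam_eq_sum_of_support_subset (p f : MvPolynomial (Fin N) ℂ)
    {t : Finset (Fin N →₀ ℕ)} (h : p.support ⊆ t) :
    lam p f = ∑ α ∈ t, coeff α p * coeff α f :=
  Finset.sum_subset h fun α _ hα => by rw [notMem_support_iff.mp hα, zero_mul]

theorem lam_comm (p f : MvPolynomial (Fin N) ℂ) : lam p f = lam f p := by
  rw [lam_eq_sum_of_support_subset p f Finset.subset_union_left,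
    lam_eq_sum_of_support_subset f p Finset.subset_union_right]
  exact Finset.sum_congr rfl fun α _ => mul_comm _ _

theorem lam_sub (p r f : MvPolynomial (Fin N) ℂ) : lam (p - r) f = lam p f - lam r f := by
  rw [lam_comm, map_sub, lam_comm f, lam_comm f]

theorem lam_X_mul_X_mul (i : Fin N) (q f : MvPolynomial (Fin N) ℂ) :
    lam (X i * q) (X i * f) = lam q f := by
  simp only [lam_apply, support_X_mul, Finset.sum_map, addLeftEmbedding_apply, coeff_X_mul]

theorem lam_eq_zero_of_mem_pow_idealOfVars {s h : MvPolynomial (Fin N) ℂ}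
    (hh : h ∈ idealOfVars (Fin N) ℂ ^ (s.totalDegree + 1)) : lam s h = 0 := by
  refine Finset.sum_eq_zero fun α hα => ?_
  rw [(mem_pow_idealOfVars_iff' _ h).mp hh α (Nat.lt_succ_of_le (le_totalDegree hα)),
    mul_zero]

theorem exists_lam_eq_of_eq_zero_on_pow_idealOfVars (χ : MvPolynomial (Fin N) ℂ →ₗ[ℂ] ℂ)
    {l : ℕ} (hχ : ∀ h ∈ idealOfVars (Fin N) ℂ ^ l, χ h = 0) : ∃ r, lam r = χ := by
  have hfin : (Function.support fun α => χ (monomial α 1)).Finite :=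
    (Finsupp.finite_of_degree_lt l).subset fun α hα => by
      by_contra hle
      exact hα (hχ _ ((monomial_mem_pow_idealOfVars_iff l α one_ne_zero).mpr (not_lt.mp hle)))
  let r : MvPolynomial (Fin N) ℂ := .ofCoeff (Finsupp.ofSupportFinite _ hfin)
  have hr (α : Fin N →₀ ℕ) : coeff α r = χ (monomial α 1) := rfl
  refine ⟨r, LinearMap.ext fun f => ?_⟩
  conv_rhs => rw [f.as_sum]
  rw [lam_comm, lam_apply, map_sum]
  refine Finset.sum_congr rfl fun α _ => ?_
  rw [hr, ← smul_eq_mul, ← map_smul, smul_monomial, smul_eq_mul, mul_one]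

theorem exists_lam_eq_on_and_eq_zero_on {I J : Ideal (MvPolynomial (Fin N) ℂ)}
    {s : MvPolynomial (Fin N) ℂ} (hs : ∀ f ∈ I ⊓ J, lam s f = 0) :
    ∃ r : MvPolynomial (Fin N) ℂ, (∀ f ∈ I, lam r f = lam s f) ∧ ∀ g ∈ J, lam r g = 0 := by
  obtain ⟨χ₁, hχ₁I, hχ₁J⟩ :=
    (lam s).exists_eq_on_and_eq_zero_on (U := I.restrictScalars ℂ)
      (W := J.restrictScalars ℂ) hs
  set 𝔪 := idealOfVars (Fin N) ℂ
  -- `χ₁` need not kill any power of `𝔪`, but it kills `𝔪 ^ k * (I + J)` for `k = deg s + 1`;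
  -- Artin–Rees turns this into `𝔪 ^ l ∩ (I + J)`, so `χ₁` can be re-extended from `I + J`
  -- by `0` on `𝔪 ^ l`.
  have hχ₁ : ∀ x ∈ 𝔪 ^ (s.totalDegree + 1) * (I ⊔ J), χ₁ x = 0 := by
    intro x hx
    refine Submodule.mul_induction_on hx (fun a ha b hb => ?_) fun x y hx hy => by
      rw [map_add, hx, hy, add_zero]
    obtain ⟨f, hf, g, hg, rfl⟩ := Submodule.mem_sup.mp hb
    rw [mul_add, map_add, hχ₁I _ (I.mul_mem_left a hf), hχ₁J _ (J.mul_mem_left a hg),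
      lam_eq_zero_of_mem_pow_idealOfVars (Ideal.mul_mem_right f _ ha), add_zero]
  obtain ⟨l, hl⟩ := 𝔪.exists_pow_inf_le_pow_mul (I ⊔ J) (s.totalDegree + 1)
  obtain ⟨χ, hχIJ, hχ𝔪⟩ := χ₁.exists_eq_on_and_eq_zero_on
    (U := (I ⊔ J).restrictScalars ℂ) (W := (𝔪 ^ l).restrictScalars ℂ)
    fun x hx => hχ₁ x (hl (inf_comm (I ⊔ J) _ ▸ hx))
  obtain ⟨r, rfl⟩ := exists_lam_eq_of_eq_zero_on_pow_idealOfVars χ hχ𝔪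
  refine ⟨r, fun f hf => ?_, fun g hg => ?_⟩
  · rw [hχIJ f (Ideal.mem_sup_left hf), hχ₁I f hf]
  · rw [hχIJ g (Ideal.mem_sup_right hg), hχ₁J g hg]

end Pairing

section Graded

variable {N : ℕ} {M : Type*} [AddCommGroup M] {w : Fin N → M}

theorem lam_weightedHomogeneousComponent (m : M) (r f : MvPolynomial (Fin N) ℂ) :
    lam (weightedHomogeneousComponent w m r) f =
      lam r (weightedHomogeneousComponent w m f) := by
  classical
  have hsupp : (weightedHomogeneousComponent w m r).support ⊆ r.support := by
    rw [support_weightedHomogeneousComponent]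
    exact Finset.filter_subset _ _
  rw [lam_eq_sum_of_support_subset _ _ hsupp, lam_apply]
  refine Finset.sum_congr rfl fun α _ => ?_
  simp only [coeff_weightedHomogeneousComponent, ite_mul, mul_ite, zero_mul, mul_zero]

theorem MvPolynomial.IsWeightedHomogeneous.lam_weightedHomogeneousComponent {m : M}
    {t : MvPolynomial (Fin N) ℂ} (ht : t.IsWeightedHomogeneous w m)
    (f : MvPolynomial (Fin N) ℂ) :
    lam t (weightedHomogeneousComponent w m f) = lam t f := by
  rw [← _root_.lam_weightedHomogeneousComponent, weightedHomogeneousComponent_eq_self ht]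

theorem IsMGraded.weightedHomogeneousComponent_mem {I : Ideal (MvPolynomial (Fin N) ℂ)}
    (hI : IsMGraded w I) {f : MvPolynomial (Fin N) ℂ} (hf : f ∈ I) (m : M) :
    weightedHomogeneousComponent w m f ∈ I := by
  classical
  let _ := weightedGradedAlgebra ℂ w
  obtain ⟨S, hS, rfl⟩ := hI
  exact weightedHomogeneousComponent_mem_of_mem ℂ w (Ideal.homogeneous_span _ _ hS) hf m

theorem isMGraded_span_X (w : Fin N → M) (i : Fin N) :
    IsMGraded w (Ideal.span {X i}) :=
  ⟨{X i}, fun _ hs => ⟨w i, Set.mem_singleton_iff.mp hs ▸ isWeightedHomogeneous_X ℂ w i⟩,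
    rfl⟩

end Graded

/-- **Prop. 4.2 (quotient by a variable)**: for an `M`-graded ideal `I`, `m ∈ M`, and a
variable `x_i`, one has `Φ_i(D_0^m(I)) = Φ_i(D_0^m(I ∩ ⟨x_i⟩)) = D_0^{m - w(i)}(I : x_i)`:
for every `M`-homogeneous `q` of degree `m - w(i)`, the statements (a) `λ_q` vanishes on
`I : ⟨x_i⟩`; (b) `q = Φ_i(p)` for some `M`-homogeneous `p` of degree `m` with `λ_p`
vanishing on `I`; and (c) `q = Φ_i(p)` for some `M`-homogeneous `p` of degree `m` with
`λ_p` vanishing on `I ∩ ⟨x_i⟩`, are all equivalent. -/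
theorem dualSpace_colon_variable {N : ℕ} {M : Type*} [AddCommGroup M] (w : Fin N → M)
    (I : Ideal (MvPolynomial (Fin N) ℂ)) (hI : IsMGraded w I)
    (m : M) (i : Fin N)
    (q : MvPolynomial (Fin N) ℂ) (hq : q.IsWeightedHomogeneous w (m - w i)) :
    List.TFAE
      [ ∀ f ∈ I.colon ((Ideal.span {X i} : Ideal (MvPolynomial (Fin N) ℂ)) : Set (MvPolynomial (Fin N) ℂ)), lam q f = 0,
        ∃ p : MvPolynomial (Fin N) ℂ, p.IsWeightedHomogeneous w m ∧
          (∀ f ∈ I, lam p f = 0) ∧ ∀ f : MvPolynomial (Fin N) ℂ, lam q f = lam p (X i * f),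
        ∃ p : MvPolynomial (Fin N) ℂ, p.IsWeightedHomogeneous w m ∧
          (∀ f ∈ I ⊓ Ideal.span {X i}, lam p f = 0) ∧
          ∀ f : MvPolynomial (Fin N) ℂ, lam q f = lam p (X i * f) ] := by
  tfae_have 2 → 3 := fun ⟨p, hp, hpI, hpq⟩ => ⟨p, hp, fun f hf => hpI f hf.1, hpq⟩
  tfae_have 3 → 1 := by
    rintro ⟨p, -, hpI, hpq⟩ f hf
    refine (hpq f).trans (hpI _ ⟨?_, Ideal.mem_span_singleton.mpr (dvd_mul_right _ _)⟩)
    exact mul_comm f (X i) ▸ Ideal.mem_colon_span_singleton.mp hf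
  tfae_have 1 → 2 := by
    intro hqI
    have hs : (X i * q).IsWeightedHomogeneous w m := by
      simpa using (isWeightedHomogeneous_X ℂ w i).mul hq
    have hsI : ∀ f ∈ I ⊓ Ideal.span {X i}, lam (X i * q) f = 0 := by
      rintro _ ⟨hfI, hfX⟩
      obtain ⟨g, rfl⟩ := Ideal.mem_span_singleton.mp hfX
      rw [lam_X_mul_X_mul]
      exact hqI g (Ideal.mem_colon_span_singleton.mpr (mul_comm (X i) g ▸ hfI))
    obtain ⟨r, hrI, hrX⟩ := exists_lam_eq_on_and_eq_zero_on hsI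
    have hlam (f : MvPolynomial (Fin N) ℂ) :
        lam (weightedHomogeneousComponent w m (X i * q - r)) f =
          lam (X i * q) f - lam r (weightedHomogeneousComponent w m f) := by
      rw [lam_weightedHomogeneousComponent, lam_sub, hs.lam_weightedHomogeneousComponent]
    refine ⟨_, weightedHomogeneousComponent_isWeightedHomogeneous m (X i * q - r),
      fun f hf => ?_, fun f => ?_⟩
    · rw [hlam, hrI _ (hI.weightedHomogeneousComponent_mem hf m),
        hs.lam_weightedHomogeneousComponent, sub_self]
    · rw [hlam, hrX _ ((isMGraded_span_X w i).weightedHomogeneousComponent_mem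
        (Ideal.mul_mem_right f _ (Ideal.mem_span_singleton_self _)) m), lam_X_mul_X_mul, sub_zero]
  tfae_finish
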